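/- arXiv:2302.12976 — 4 statements merged into one kernel-verified Lean document; each statement's English description precedes it below -/
import Mathlib

section
/- (More accesses do not guarantee a higher temperature.) Fix reals k > 0, γ > 0, T_heat > 0, T₀ ≥ 0 and natural numbers s₁ > s₂ ≥ 1. Then there exist interval lengths x₁ > x₂ > 0 such that T₀·exp(-k·x₁) + γ·T_heat⁴·s₁/x₁ < T₀·exp(-k·x₂) + γ·T_heat⁴·s₂/x₂; that is, an item accessed s₁ times over a sufficiently long interval has strictly lower temperature than an item accessed only s₂ times over a short interval. -/
/-- More accesses do not guarantee a higher temperature: for `s₁ > s₂ ≥ 1`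
there exist interval lengths `x₁ > x₂ > 0` such that the item accessed `s₁`
times over the long interval `x₁` is strictly colder than the item accessed
`s₂` times over the short interval `x₂`. -/
theorem more_accesses_not_always_hotter (k γ Theat T₀ : ℝ) (s₁ s₂ : ℕ)
    (hk : 0 < k) (hγ : 0 < γ) (hTheat : 0 < Theat) (hT₀ : 0 ≤ T₀)
    (hs₂ : 1 ≤ s₂) (hs : s₂ < s₁) :
    ∃ x₁ x₂ : ℝ, 0 < x₂ ∧ x₂ < x₁ ∧
      T₀ * Real.exp (-k * x₁) + γ * Theat ^ 4 * (s₁ : ℝ) / x₁ <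
        T₀ * Real.exp (-k * x₂) + γ * Theat ^ 4 * (s₂ : ℝ) / x₂ := by
  set C : ℝ := γ * Theat ^ 4 with hCdef
  have hC : 0 < C := by positivity
  have hs₂' : (1 : ℝ) ≤ (s₂ : ℝ) := by exact_mod_cast hs₂
  have hCs₂ : 0 < C * s₂ := by positivity
  set A : ℝ := T₀ / k + C * s₁ with hAdef
  have hA : 0 < A := by
    have : 0 ≤ T₀ / k := by positivity
    have h1 : (0:ℝ) < C * s₁ := by
      have : (0:ℝ) < (s₁ : ℝ) := by exact_mod_cast (Nat.lt_of_lt_of_le Nat.zero_lt_one (le_trans hs₂ hs.le))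
      positivity
    rw [hAdef]; linarith
  refine ⟨max 2 (A / (C * s₂) + 1), 1, one_pos, lt_of_lt_of_le one_lt_two (le_max_left _ _), ?_⟩
  set x₁ : ℝ := max 2 (A / (C * s₂) + 1) with hx₁def
  have hx₁2 : (2:ℝ) ≤ x₁ := le_max_left _ _
  have hx₁pos : 0 < x₁ := lt_of_lt_of_le two_pos hx₁2
  have hx₁A : A / (C * s₂) < x₁ := lt_of_lt_of_le (lt_add_one _) (le_max_right _ _)
  -- exp bound
  have hexp : Real.exp (-k * x₁) ≤ 1 / (k * x₁) := by
    have hkx : 0 < k * x₁ := by positivity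
    have h1 : k * x₁ ≤ Real.exp (k * x₁) := (Real.add_one_le_exp _).trans' (by linarith)
    rw [show -k * x₁ = -(k * x₁) by ring, Real.exp_neg]
    exact (one_div (Real.exp (k * x₁))) ▸ by
      apply one_div_le_one_div_of_le hkx h1 |>.trans_eq rfl
  have hLHS : T₀ * Real.exp (-k * x₁) + C * (s₁ : ℝ) / x₁ ≤ A / x₁ := by
    have h1 : T₀ * Real.exp (-k * x₁) ≤ T₀ * (1 / (k * x₁)) :=
      mul_le_mul_of_nonneg_left hexp hT₀
    have h2 : T₀ * (1 / (k * x₁)) = T₀ / k / x₁ := by field_simp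
    have : A / x₁ = T₀ / k / x₁ + C * (s₁ : ℝ) / x₁ := by rw [hAdef]; ring
    linarith [h1, h2 ▸ h1]
  have hRHS : C * s₂ ≤ T₀ * Real.exp (-k * 1) + C * (s₂ : ℝ) / 1 := by
    have : 0 ≤ T₀ * Real.exp (-k * 1) := by positivity
    linarith
  have hlt : A / x₁ < C * s₂ := by
    rw [div_lt_iff₀ hx₁pos]
    calc A = A / (C * s₂) * (C * s₂) := by field_simp
    _ < x₁ * (C * s₂) := by exact mul_lt_mul_of_pos_right hx₁A hCs₂
    _ = C * s₂ * x₁ := by ring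
  calc T₀ * Real.exp (-k * x₁) + C * (s₁ : ℝ) / x₁ ≤ A / x₁ := hLHS
  _ < C * s₂ := hlt
  _ ≤ _ := hRHS
end

section
/- (Bound on decrement rounds in Algorithm 4.) Let σ = (a₁, …, a_m) be a stream of elements of a type with decidable equality, let k ≥ 2, and run the Misra–Gries algorithm with capacity k-1 on σ: maintain a finite map T from elements to positive natural-number counters; on reading aᵢ, if aᵢ has a counter in T, increment it; else if T currently holds fewer than k-1 elements, insert aᵢ with counter 1; otherwise decrement the counter of every element of T by 1 and remove those that reach 0 (a 'decrement round'). Then the total number of decrement rounds performed while processing the whole stream is at most m/k. -/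
/-- One step of the Misra–Gries algorithm with capacity `k - 1`.  The state is
a finitely supported map `f : α →₀ ℕ` from elements to (positive) counters;
elements with counter `0` are exactly those not present in the map.  On reading
`a`: if `a` has a counter, increment it; else if fewer than `k - 1` elements
are currently stored, insert `a` with counter `1`; otherwise perform a
*decrement round*: decrement every counter by `1` (counters reaching `0` drop
out of the support, i.e. are removed). -/
noncomputable def mgStep {α : Type*} [DecidableEq α] (k : ℕ) (f : α →₀ ℕ) (a : α) :
    α →₀ ℕ :=
  if 0 < f a then f.update a (f a + 1)
  else if f.support.card < k - 1 then f.update a 1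
  else f.mapRange (· - 1) (Nat.zero_sub 1)

/-- Running the Misra–Gries algorithm with capacity `k - 1` on the stream `σ`,
starting from the empty map; `mgRun k σ j` is the final estimated count `f̂ⱼ`
of element `j` (`0` if `j` is absent from the final map). -/
noncomputable def mgRun {α : Type*} [DecidableEq α] (k : ℕ) (σ : List α) : α →₀ ℕ :=
  σ.foldl (mgStep k) 0

/-- The total number of decrement rounds performed while processing `σ`. -/
noncomputable def mgDecRounds {α : Type*} [DecidableEq α] (k : ℕ) (σ : List α) : ℕ :=
  (σ.foldl
    (fun p a =>
      (mgStep k p.1 a,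
        if 0 < p.1 a then p.2
        else if p.1.support.card < k - 1 then p.2
        else p.2 + 1))
    ((0 : α →₀ ℕ), 0)).2

/-!
The total of all counters, `Finsupp.degree`, is the potential. Reading an element raises it by
one, except in a decrement round: there the map is full, so all `k - 1` stored counters lose one
and the element read is discarded, a net loss of `k - 1` against the `+ 1` of reading. Hence
`degree + k * rounds` grows by exactly one per element, so `k * rounds ≤ m`.
-/

open Finsupp

namespace Finsupp

variable {α R : Type*}

theorem degree_update_add [AddCommMonoid R] (f : α →₀ R) (a : α) (b : R) :
    degree (f.update a b) + f a = degree f + b := by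
  conv_rhs => rw [← erase_add_single a f]
  rw [update_eq_erase_add_single, map_add, map_add, degree_single, degree_single, add_right_comm]

theorem degree_mapRange_pred_add_card (f : α →₀ ℕ) :
    degree (f.mapRange (· - 1) (Nat.zero_sub 1)) + f.support.card = degree f := by
  rw [degree_apply, degree_apply, Finset.card_eq_sum_ones,
    Finset.sum_subset support_mapRange fun x _ hx => by simpa using hx, ← Finset.sum_add_distrib]
  refine Finset.sum_congr rfl fun x hx => ?_
  have : f x ≠ 0 := mem_support_iff.mp hx
  simp only [mapRange_apply]
  omega

end Finsupp

section MisraGries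

variable {α : Type*} [DecidableEq α] {k : ℕ}

noncomputable def mgCountStep (k : ℕ) (p : (α →₀ ℕ) × ℕ) (a : α) : (α →₀ ℕ) × ℕ :=
  (mgStep k p.1 a,
    if 0 < p.1 a then p.2
    else if p.1.support.card < k - 1 then p.2
    else p.2 + 1)

theorem mgDecRounds_eq (k : ℕ) (σ : List α) :
    mgDecRounds k σ = (σ.foldl (mgCountStep k) (0, 0)).2 :=
  rfl

theorem card_support_mgStep_le {f : α →₀ ℕ} (a : α) (hf : f.support.card ≤ k - 1) :
    (mgStep k f a).support.card ≤ k - 1 := by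
  unfold mgStep
  split_ifs with hpos hroom
  · rw [support_update_ne_zero f a (by omega),
      Finset.insert_eq_self.mpr (mem_support_iff.mpr hpos.ne')]
    exact hf
  · rw [support_update_ne_zero f a one_ne_zero]
    exact (Finset.card_insert_le _ _).trans (by omega)
  · exact (Finset.card_le_card support_mapRange).trans hf

theorem degree_mgCountStep (hk : 1 ≤ k) {p : (α →₀ ℕ) × ℕ} (a : α)
    (hp : p.1.support.card ≤ k - 1) :
    degree (mgCountStep k p a).1 + k * (mgCountStep k p a).2 = degree p.1 + k * p.2 + 1 := by
  obtain ⟨f, d⟩ := p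
  have hupdate := degree_update_add f a
  unfold mgCountStep mgStep
  dsimp only at hp ⊢
  split_ifs with hpos hroom
  · have := hupdate (f a + 1)
    omega
  · have := hupdate 1
    omega
  · have := degree_mapRange_pred_add_card f
    rw [Nat.mul_succ]
    omega

theorem foldl_mgCountStep (hk : 1 ≤ k) (σ : List α) {p : (α →₀ ℕ) × ℕ}
    (hp : p.1.support.card ≤ k - 1) :
    (σ.foldl (mgCountStep k) p).1.support.card ≤ k - 1 ∧
      degree (σ.foldl (mgCountStep k) p).1 + k * (σ.foldl (mgCountStep k) p).2 =
        degree p.1 + k * p.2 + σ.length := by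
  induction σ generalizing p with
  | nil => exact ⟨hp, rfl⟩
  | cons a σ ih =>
    obtain ⟨hcard, hdegree⟩ := ih (p := mgCountStep k p a) (card_support_mgStep_le a hp)
    refine ⟨hcard, ?_⟩
    rw [List.foldl_cons, hdegree, degree_mgCountStep hk a hp, List.length_cons]
    ring

theorem mul_mgDecRounds_le_length (hk : 1 ≤ k) (σ : List α) :
    k * mgDecRounds k σ ≤ σ.length := by
  have := (foldl_mgCountStep hk σ (p := (0, 0)) (by simp)).2
  rw [mgDecRounds_eq]
  simp only [map_zero, mul_zero, zero_add] at this
  omega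

end MisraGries

/-- Bound on decrement rounds: running Misra–Gries with capacity `k - 1`
(`k ≥ 2`) on a stream of length `m` performs at most `m / k` decrement
rounds. -/
theorem mgDecRounds_le {α : Type*} [DecidableEq α] (k : ℕ) (hk : 2 ≤ k)
    (σ : List α) :
    (mgDecRounds k σ : ℝ) ≤ (σ.length : ℝ) / (k : ℝ) := by
  rw [le_div_iff₀ (by positivity), mul_comm]
  exact_mod_cast mul_mgDecRounds_le_length (by omega) σ
end

section
/- (Misra–Gries undercount guarantee, as claimed for Algorithm 4.) Let σ = (a₁, …, a_m) be a stream of elements of a type with decidable equality, let k ≥ 2, and run the Misra–Gries algorithm with capacity k-1 on σ. Then for every element j, the returned estimate satisfies f_j - m/k ≤ f̂_j ≤ f_j, where f_j is the true number of occurrences of j in σ. -/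
/-!
Call a step of the algorithm a decrement step when it lowers all counters. Such a step discards
the incoming element together with one unit from each of the at least `k - 1` stored counters,
so `D` decrement steps destroy at least `k * D` of the `m` stream elements, whence `D ≤ m / k`.
Every other step adds exactly one unit, to the counter of the element read, so each counter
falls short of the true frequency by at most `D` and never exceeds it.
-/

namespace Finsupp

variable {α : Type*}

theorem degree_mapRange_tsub_one_add_card_support (f : α →₀ ℕ) :
    (f.mapRange (· - 1) (Nat.zero_sub 1)).degree + f.support.card = f.degree := by
  have h : (f.mapRange (· - 1) (Nat.zero_sub 1)).degree = ∑ x ∈ f.support, (f x - 1) :=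
    Finset.sum_subset support_mapRange fun x _ hx => by simpa using hx
  rw [h, degree_apply, Finset.card_eq_sum_ones, ← Finset.sum_add_distrib]
  refine Finset.sum_congr rfl fun x hx => ?_
  have : f x ≠ 0 := mem_support_iff.mp hx
  omega

end Finsupp

section MisraGries

variable {α : Type*} [DecidableEq α]

theorem mgStep_eq_add_single_or_decrement (k : ℕ) (f : α →₀ ℕ) (a : α) :
    mgStep k f a = f + Finsupp.single a 1 ∨
      f a = 0 ∧ k ≤ f.support.card + 1 ∧ mgStep k f a = f.mapRange (· - 1) (Nat.zero_sub 1) := by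
  unfold mgStep
  split_ifs with hpos hcard
  · left
    ext x
    rcases eq_or_ne x a with rfl | hx <;> simp [*]
  · left
    ext x
    rcases eq_or_ne x a with rfl | hx <;> simp_all
  · exact Or.inr ⟨by omega, by omega, rfl⟩

theorem mgStep_le_add_single (k : ℕ) (f : α →₀ ℕ) (a : α) :
    mgStep k f a ≤ f + Finsupp.single a 1 := by
  rcases mgStep_eq_add_single_or_decrement k f a with h | ⟨-, -, h⟩
  · exact h.le
  · intro x
    rw [h, Finsupp.mapRange_apply, Finsupp.add_apply]
    exact (Nat.sub_le _ _).trans (Nat.le_add_right _ _)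

theorem mgRun_append_singleton (k : ℕ) (σ : List α) (a : α) :
    mgRun k (σ ++ [a]) = mgStep k (mgRun k σ) a := by
  simp [mgRun]

theorem List.count_append_singleton (σ : List α) (a j : α) :
    (σ ++ [a]).count j = σ.count j + Finsupp.single a 1 j := by
  simp [List.count_singleton, Finsupp.single_apply]

theorem mgRun_apply_le_count (k : ℕ) (σ : List α) (j : α) : mgRun k σ j ≤ σ.count j := by
  induction σ using List.reverseRecOn with
  | nil => simp [mgRun]
  | append_singleton σ a ih =>
    rw [mgRun_append_singleton, List.count_append_singleton]
    exact (mgStep_le_add_single k _ a j).trans (by simpa using ih)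

theorem exists_mgRun_decrement_bound (k : ℕ) (σ : List α) :
    ∃ D, (∀ j, σ.count j ≤ mgRun k σ j + D) ∧ (mgRun k σ).degree + k * D ≤ σ.length := by
  induction σ using List.reverseRecOn with
  | nil => exact ⟨0, by simp [mgRun]⟩
  | append_singleton σ a ih =>
    obtain ⟨D, hcount, hdeg⟩ := ih
    set f := mgRun k σ
    rw [mgRun_append_singleton, List.length_append, List.length_singleton]
    rcases mgStep_eq_add_single_or_decrement k f a with h | ⟨hfa, hcard, h⟩
    · refine ⟨D, fun j => ?_, ?_⟩
      · rw [h, List.count_append_singleton, Finsupp.add_apply]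
        linarith [hcount j]
      · rw [h, map_add, Finsupp.degree_single]
        linarith
    · refine ⟨D + 1, fun j => ?_, ?_⟩
      · rw [h, List.count_append_singleton, Finsupp.mapRange_apply]
        rcases eq_or_ne a j with rfl | hj
        · simpa [hfa] using hcount a
        · rw [Finsupp.single_eq_of_ne' hj]
          have := hcount j
          omega
      · have := Finsupp.degree_mapRange_tsub_one_add_card_support f
        rw [h, mul_add, mul_one]
        omega

end MisraGries

/-- Misra–Gries undercount guarantee: for every element `j`, the estimate
`f̂ⱼ` satisfies `fⱼ - m / k ≤ f̂ⱼ ≤ fⱼ`, where `fⱼ` is the true number of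
occurrences of `j` in the stream `σ` of length `m`. -/
theorem mgRun_count_bounds {α : Type*} [DecidableEq α] (k : ℕ) (hk : 2 ≤ k)
    (σ : List α) (j : α) :
    (σ.count j : ℝ) - (σ.length : ℝ) / (k : ℝ) ≤ (mgRun k σ j : ℝ) ∧
      (mgRun k σ j : ℝ) ≤ (σ.count j : ℝ) := by
  obtain ⟨D, hcount, hdecr⟩ := exists_mgRun_decrement_bound k σ
  have hk_pos : (0 : ℝ) < k := by exact_mod_cast (by omega : 0 < k)
  have hD : (D : ℝ) ≤ σ.length / k := by
    rw [le_div_iff₀' hk_pos]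
    exact_mod_cast (Nat.le_add_left _ _).trans hdecr
  have hj : (σ.count j : ℝ) ≤ mgRun k σ j + D := by exact_mod_cast hcount j
  exact ⟨by linarith, by exact_mod_cast mgRun_apply_le_count k σ j⟩
end

section
/- (Heavy-hitter completeness of Algorithm 4.) Let σ = (a₁, …, a_m) be a stream of elements of a type with decidable equality, let k ≥ 2, and run the Misra–Gries algorithm with capacity k-1 on σ. Then every element j whose true number of occurrences satisfies f_j > m/k is present in the final map T (i.e. f̂_j > 0); hence the output set T contains all elements j with f_j > m/k. -/
private def Ttot {α : Type*} (f : α →₀ ℕ) : ℕ := f.sum fun _ n => n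

private lemma Ttot_add {α : Type*} (f g : α →₀ ℕ) : Ttot (f + g) = Ttot f + Ttot g :=
  Finsupp.sum_add_index' (fun _ => rfl) (fun _ _ _ => rfl)

private lemma Ttot_single {α : Type*} (a : α) (b : ℕ) : Ttot (Finsupp.single a b) = b := by
  simp [Ttot, Finsupp.sum_single_index]

private lemma Ttot_update {α : Type*} [DecidableEq α] (f : α →₀ ℕ) (a : α) (b : ℕ) :
    Ttot (f.update a b) + f a = Ttot f + b := by
  have h1 : Ttot (f.update a b) = b + Ttot (f.erase a) := by
    rw [Finsupp.update_eq_single_add_erase, Ttot_add, Ttot_single]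
  have h2 : Ttot f = f a + Ttot (f.erase a) := by
    conv_lhs => rw [← Finsupp.single_add_erase a f]
    rw [Ttot_add, Ttot_single]
  omega

private lemma Ttot_mapRange_sub {α : Type*} (f : α →₀ ℕ) :
    Ttot (f.mapRange (· - 1) (Nat.zero_sub 1)) + f.support.card ≤ Ttot f := by
  classical
  have hsub : (f.mapRange (· - 1) (Nat.zero_sub 1)).support ⊆ f.support :=
    Finsupp.support_mapRange
  have h1 : Ttot (f.mapRange (· - 1) (Nat.zero_sub 1)) ≤ ∑ x ∈ f.support, (f x - 1) := by
    rw [Ttot, Finsupp.sum]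
    refine Finset.sum_le_sum_of_subset_of_nonneg hsub (fun _ _ _ => Nat.zero_le _) |>.trans_eq ?_
    exact Finset.sum_congr rfl (fun x _ => by simp)
  have h2 : ∑ x ∈ f.support, (f x - 1) + f.support.card = ∑ x ∈ f.support, f x := by
    rw [Finset.card_eq_sum_ones, ← Finset.sum_add_distrib]
    exact Finset.sum_congr rfl (fun x hx => by
      have := Finsupp.mem_support_iff.mp hx; omega)
  have h3 : Ttot f = ∑ x ∈ f.support, f x := rfl
  omega

private lemma update_apply' {α : Type*} [DecidableEq α] (f : α →₀ ℕ) (a : α) (b : ℕ) (j : α) :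
    (f.update a b) j = if j = a then b else f j := by
  rw [Finsupp.coe_update, Function.update_apply]

private lemma mgStep_key {α : Type*} [DecidableEq α] (k : ℕ) (hk : 2 ≤ k) (f : α →₀ ℕ)
    (a j : α) :
    k * (if a = j then 1 else 0) + Ttot (mgStep k f a) + k * f j
      ≤ 1 + Ttot f + k * (mgStep k f a) j := by
  unfold mgStep
  rcases eq_or_ne a j with rfl | hne
  · rw [if_pos rfl]
    split_ifs with h1 h2
    · have hT := Ttot_update f a (f a + 1)
      rw [update_apply', if_pos rfl, Nat.mul_add, Nat.mul_one]
      omega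
    · have hT := Ttot_update f a 1
      rw [update_apply', if_pos rfl]
      have ha : f a = 0 := by omega
      rw [ha, Nat.mul_zero, Nat.mul_one]
      omega
    · show k * 1 + Ttot (f.mapRange (· - 1) (Nat.zero_sub 1)) + k * f a
        ≤ 1 + Ttot f + k * (f.mapRange (· - 1) (Nat.zero_sub 1)) a
      have hT := Ttot_mapRange_sub f
      have ha : f a = 0 := by omega
      rw [Finsupp.mapRange_apply, ha]
      simp only [Nat.zero_sub, Nat.mul_zero, Nat.mul_one]
      omega
  · rw [if_neg hne, Nat.mul_zero]
    split_ifs with h1 h2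
    · have hT := Ttot_update f a (f a + 1)
      rw [update_apply', if_neg (Ne.symm hne)]
      omega
    · have hT := Ttot_update f a 1
      rw [update_apply', if_neg (Ne.symm hne)]
      omega
    · show 0 + Ttot (f.mapRange (· - 1) (Nat.zero_sub 1)) + k * f j
        ≤ 1 + Ttot f + k * (f.mapRange (· - 1) (Nat.zero_sub 1)) j
      have hT := Ttot_mapRange_sub f
      have hcard : k - 1 ≤ f.support.card := by omega
      rw [Finsupp.mapRange_apply]
      rcases Nat.eq_zero_or_pos (f j) with hz | hp
      · rw [hz]; omega
      · have hmul : k * f j = k * (f j - 1) + k := by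
          rw [← Nat.mul_succ]; congr 1; omega
        omega

private lemma mg_inv {α : Type*} [DecidableEq α] (k : ℕ) (hk : 2 ≤ k) (j : α) :
    ∀ (σ : List α) (f : α →₀ ℕ),
      k * σ.count j + Ttot (σ.foldl (mgStep k) f) + k * f j
        ≤ σ.length + Ttot f + k * (σ.foldl (mgStep k) f) j
  | [], f => by simp
  | a :: σ, f => by
    have IH := mg_inv k hk j σ (mgStep k f a)
    have hstep := mgStep_key k hk f a j
    have hcount : (a :: σ).count j = σ.count j + (if a = j then 1 else 0) := by
      simp [List.count_cons]
    rw [List.foldl_cons, List.length_cons, hcount, Nat.mul_add]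
    omega

/-- Heavy-hitter completeness: every element `j` occurring more than `m / k`
times in the stream `σ` of length `m` is present in the final map, i.e. has a
strictly positive final counter. -/
theorem mgRun_heavy_hitters_present {α : Type*} [DecidableEq α] (k : ℕ)
    (hk : 2 ≤ k) (σ : List α) (j : α)
    (hj : (σ.length : ℝ) / (k : ℝ) < (σ.count j : ℝ)) :
    0 < mgRun k σ j := by
  have hkR : (0 : ℝ) < (k : ℝ) := by exact_mod_cast Nat.lt_of_lt_of_le Nat.zero_lt_two hk
  have hlt : (σ.length : ℝ) < (σ.count j : ℝ) * (k : ℝ) := (div_lt_iff₀ hkR).mp hj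
  have hltN : σ.length < σ.count j * k := by exact_mod_cast hlt
  have hinv := mg_inv k hk j σ 0
  simp only [Finsupp.coe_zero, Pi.zero_apply, Nat.mul_zero, Nat.add_zero] at hinv
  have h0 : Ttot (0 : α →₀ ℕ) = 0 := rfl
  rw [h0] at hinv
  have : k * σ.count j = σ.count j * k := Nat.mul_comm ..
  by_contra h
  have hz : mgRun k σ j = 0 := by omega
  unfold mgRun at hz
  rw [hz, Nat.mul_zero] at hinv
  omega
end
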